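/- Stanley's q-binomial identity: for nonnegative integers a, b and integers c, d, [c+a choose a]_q · [d+b choose b]_q = Σ_{k=0}^{min(a,b)} q^{(a-k)(b-k)} [c+d+k choose k]_q · [c+a-b choose a-k]_q · [d+b-a choose b-k]_q. -/
import Mathlib


noncomputable section
open Finset

/-- The field ℚ(q) of rational functions over ℚ; `q` denotes the variable. -/
abbrev K : Type := RatFunc ℚ

def q : K := RatFunc.X

/-- The q-Pochhammer-style q-binomial coefficient `[m choose k]_z` with base `z`,
`[m choose k]_z = (z^{m-k+1};z)_k / (z;z)_k`, defined for any `m : ℤ` and `k : ℕ`. -/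
def qbin (z : K) (m : ℤ) (k : ℕ) : K :=
  (∏ i ∈ Finset.range k, (1 - z ^ (m - k + 1 + i))) /
    (∏ i ∈ Finset.range k, (1 - z ^ (i + 1)))


lemma hq0 : q ≠ 0 := RatFunc.X_ne_zero

lemma q_pow_ne_one {n : ℕ} (hn : n ≠ 0) : q ^ n ≠ 1 := by
  intro h
  have h2 : (algebraMap (Polynomial ℚ) K) (Polynomial.X ^ n) = algebraMap (Polynomial ℚ) K 1 := by
    simpa [q, map_pow] using h
  have h3 := RatFunc.algebraMap_injective ℚ h2
  have := congrArg Polynomial.natDegree h3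
  rw [Polynomial.natDegree_X_pow, Polynomial.natDegree_one] at this; exact hn this

lemma one_sub_q_pow_ne_zero {n : ℕ} (hn : n ≠ 0) : (1 : K) - q ^ n ≠ 0 := by
  intro h
  exact q_pow_ne_one hn (by linear_combination -h)

lemma q_zpow_ne_zero (e : ℤ) : q ^ e ≠ 0 := zpow_ne_zero e hq0

lemma one_sub_q_zpow_ne_zero {e : ℤ} (he : e ≠ 0) : (1 : K) - q ^ e ≠ 0 := by
  rcases lt_or_gt_of_ne he with h | h
  · intro hh
    have h1 : q ^ e = 1 := by linear_combination -hh
    have h2 : q ^ (-e) = 1 := by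
      rw [zpow_neg, h1, inv_one]
    lift -e to ℕ using (by omega) with n hn
    rw [zpow_natCast] at h2
    exact q_pow_ne_one (by omega) h2
  · intro hh
    have h1 : q ^ e = 1 := by linear_combination -hh
    lift e to ℕ using (by omega) with n hn
    rw [zpow_natCast] at h1
    exact q_pow_ne_one (by omega) h1

def Pn (m : ℤ) (k : ℕ) : K := ∏ i ∈ Finset.range k, (1 - q ^ (m - k + 1 + i))
def Dn (k : ℕ) : K := ∏ i ∈ Finset.range k, (1 - q ^ (i + 1))

lemma qbin_eq (m : ℤ) (k : ℕ) : qbin q m k = Pn m k / Dn k := rfl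

lemma Dn_ne_zero (k : ℕ) : Dn k ≠ 0 := by
  apply Finset.prod_ne_zero_iff.2
  intro i _
  exact one_sub_q_pow_ne_zero (Nat.succ_ne_zero i)

lemma Dn_succ (k : ℕ) : Dn (k+1) = Dn k * (1 - q ^ (k+1)) := Finset.prod_range_succ _ _

lemma Pn_congr {m m' : ℤ} (k : ℕ) (h : m = m') : Pn m k = Pn m' k := by rw [h]

lemma Pn_succ_top (m : ℤ) (k : ℕ) : Pn (m+1) (k+1) = Pn m k * (1 - q ^ (m+1)) := by
  rw [Pn, Finset.prod_range_succ]
  congr 1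
  · apply Finset.prod_congr rfl
    intro i _
    congr 2
    push_cast; ring
  · congr 1
    push_cast; ring

lemma Pn_succ_bot (m : ℤ) (k : ℕ) : Pn m (k+1) = (1 - q ^ (m - k)) * Pn m k := by
  rw [Pn, Finset.prod_range_succ']
  rw [mul_comm]
  congr 1
  · congr 2
    push_cast; ring
  · apply Finset.prod_congr rfl
    intro i _
    congr 2
    push_cast; ring

lemma Pn_add (m : ℤ) (s t : ℕ) : Pn m (s+t) = Pn (m - t) s * Pn m t := by
  rw [Pn, Finset.prod_range_add]
  congr 1
  · apply Finset.prod_congr rfl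
    intro i _
    congr 2
    push_cast; ring
  · apply Finset.prod_congr rfl
    intro i _
    congr 2
    push_cast; ring

lemma Dn_add (s t : ℕ) : Dn (s+t) = Dn s * Pn (s+t : ℕ) t := by
  rw [Dn, Finset.prod_range_add]
  congr 1
  simp only [Pn]
  apply Finset.prod_congr rfl
  intro i _
  have h1 : ((s+t:ℕ):ℤ) - t + 1 + i = ((s + i + 1 : ℕ) : ℤ) := by push_cast; ring
  rw [h1, zpow_natCast]

lemma qbin_zero (m : ℤ) : qbin q m 0 = 1 := by
  simp [qbin]

lemma qbin_zero_top (j : ℕ) : qbin q 0 (j+1) = 0 := by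
  rw [qbin_eq]
  have : Pn 0 (j+1) = 0 := by
    apply Finset.prod_eq_zero (Finset.self_mem_range_succ j)
    have : (0:ℤ) - (j+1:ℕ) + 1 + j = 0 := by push_cast; ring
    rw [this, zpow_zero, sub_self]
  rw [this, zero_div]

lemma pascalA (m : ℤ) (k : ℕ) :
    qbin q (m+1) (k+1) = qbin q m k + q ^ ((k:ℤ)+1) * qbin q m (k+1) := by
  rw [qbin_eq, qbin_eq, qbin_eq, Pn_succ_top, Dn_succ, Pn_succ_bot]
  have hd := Dn_ne_zero k
  have h1 : (1:K) - q ^ (k+1) ≠ 0 := one_sub_q_pow_ne_zero (Nat.succ_ne_zero k)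
  simp only [zpow_add₀ hq0, zpow_sub₀ hq0, zpow_one, zpow_natCast]
  field_simp [hq0]
  ring

lemma pascalB (m : ℤ) (k : ℕ) :
    qbin q (m+1) (k+1) = q ^ (m - k) * qbin q m k + qbin q m (k+1) := by
  rw [qbin_eq, qbin_eq, qbin_eq, Pn_succ_top, Dn_succ, Pn_succ_bot]
  have hd := Dn_ne_zero k
  have h1 : (1:K) - q ^ (k+1) ≠ 0 := one_sub_q_pow_ne_zero (Nat.succ_ne_zero k)
  simp only [zpow_add₀ hq0, zpow_sub₀ hq0, zpow_one, zpow_natCast]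
  field_simp [hq0]
  ring

lemma absorb (m : ℤ) (k : ℕ) :
    (1 - q ^ ((k:ℤ)+1)) * qbin q m (k+1) = (1 - q ^ (m - k)) * qbin q m k := by
  rw [qbin_eq, qbin_eq, Dn_succ, Pn_succ_bot]
  have hd := Dn_ne_zero k
  have h1 : (1:K) - q ^ (k+1) ≠ 0 := one_sub_q_pow_ne_zero (Nat.succ_ne_zero k)
  simp only [zpow_add₀ hq0, zpow_sub₀ hq0, zpow_one, zpow_natCast]
  field_simp [hq0]
  ring

lemma Cstep (m : ℤ) (j : ℕ) :
    q ^ ((j:ℤ)+1) * qbin q m (j+1) + qbin q m j = qbin q (m+1) (j+1) := by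
  have h1 := pascalB m j
  have h2 := absorb m j
  linear_combination -h1 - h2

lemma trinomial (m : ℤ) (a b : ℕ) (hab : a ≤ b) :
    qbin q m b * qbin q (b:ℤ) a = qbin q m a * qbin q (m - a) (b - a) := by
  obtain ⟨s, rfl⟩ : ∃ s, b = s + a := ⟨b - a, by omega⟩
  have hsa : s + a - a = s := by omega
  rw [hsa, qbin_eq, qbin_eq, qbin_eq, qbin_eq, Pn_add m s a, Dn_add s a]
  have hP : Pn ((s+a : ℕ) : ℤ) a ≠ 0 := by
    apply Finset.prod_ne_zero_iff.2
    intro i hi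
    apply one_sub_q_zpow_ne_zero
    simp only [Finset.mem_range] at hi
    omega
  have hda := Dn_ne_zero a
  have hds := Dn_ne_zero s
  push_cast at hP ⊢
  field_simp

lemma qbin_congr {m m' : ℤ} (k : ℕ) (h : m = m') : qbin q m k = qbin q m' k := by rw [h]

def Tm (a b : ℕ) (c d : ℤ) (k : ℕ) : K :=
  q ^ (((a:ℤ)-k) * ((b:ℤ)-k)) * qbin q (c+d+k) k * qbin q (c+a-b) (a-k) * qbin q (d+b-a) (b-k)

def Ut (n b : ℕ) (c d : ℤ) (k : ℕ) : K :=
  q ^ (((n:ℤ)+1-k)*((b:ℤ)-k)) * qbin q (c+d+k) k * qbin q (c+n-b) (n-k) * qbin q (d+b-n-1) (b-k)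

def Vt (n b : ℕ) (c d : ℤ) (k : ℕ) : K :=
  q ^ (((n:ℤ)-k)*((b:ℤ)-k)) * qbin q (c+d+k) k * qbin q (c+n-b) (n-k) * qbin q (d+b-n-1) (b-(k+1))

def Zt (n b : ℕ) (c d : ℤ) (k : ℕ) : K :=
  q ^ (((n:ℤ)+1-k)*((b:ℤ)-k)) *
    (q ^ ((n:ℤ)+1-k) * qbin q (c+d+k) k - q ^ ((n:ℤ)+1) * qbin q (c-1+d+k) k) *
    qbin q (c+n-b) (n+1-k) * qbin q (d+b-n-1) (b-k)

lemma stepA1 (n b k : ℕ) (c d : ℤ) (hk : k ≤ n) :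
    Tm (n+1) b c d k - q ^ ((n:ℤ)+1) * Tm (n+1) b (c-1) d k
      = Ut n b c d k + Zt n b c d k := by
  simp only [Tm, Ut, Zt]
  have e2 : (n+1) - k = (n-k)+1 := by omega
  rw [e2]
  have e1 : qbin q (c + ((n+1:ℕ):ℤ) - b) ((n-k)+1) = qbin q ((c + n - b)+1) ((n-k)+1) :=
    qbin_congr _ (by push_cast; ring)
  rw [e1, pascalA (c + (n:ℤ) - b) (n-k)]
  have e5 : ((n-k:ℕ):ℤ) + 1 = (n:ℤ)+1-k := by rw [Nat.cast_sub hk]; ring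
  rw [e5]
  have e4 : qbin q (c - 1 + ((n+1:ℕ):ℤ) - b) ((n-k)+1) = qbin q (c + n - b) ((n-k)+1) :=
    qbin_congr _ (by push_cast; ring)
  rw [e4]
  have e3 : qbin q (d + (b:ℤ) - ((n+1:ℕ):ℤ)) (b-k) = qbin q (d + b - n - 1) (b-k) :=
    qbin_congr _ (by push_cast; ring)
  rw [e3]
  have e6 : qbin q (c - 1 + d + (k:ℤ)) k = qbin q (c - 1 + d + k) k := rfl
  have e7 : (((n+1:ℕ):ℤ) - k) = ((n:ℤ)+1-k) := by push_cast; ring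
  rw [e7]
  ring

lemma stepA2 (n b : ℕ) (c d : ℤ) :
    Tm (n+1) b c d (n+1) - q ^ ((n:ℤ)+1) * Tm (n+1) b (c-1) d (n+1)
      = Zt n b c d (n+1) := by
  simp only [Tm, Zt]
  have e2 : (n+1) - (n+1) = 0 := by omega
  rw [e2]
  simp only [qbin_zero]
  have e7 : ((((n+1:ℕ)):ℤ) - ((n+1:ℕ):ℤ)) * ((b:ℤ) - ((n+1:ℕ):ℤ)) = 0 := by push_cast; ring
  have e7' : (((n:ℤ)+1 - ((n+1:ℕ):ℤ))) * ((b:ℤ) - ((n+1:ℕ):ℤ)) = 0 := by push_cast; ring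
  have e8 : ((n:ℤ)+1-((n+1:ℕ):ℤ)) = 0 := by push_cast; ring
  rw [e7, e7', e8]
  simp only [zpow_zero]
  have e3 : qbin q (d + (b:ℤ) - ((n+1:ℕ):ℤ)) (b-(n+1)) = qbin q (d + b - n - 1) (b-(n+1)) :=
    qbin_congr _ (by push_cast; ring)
  rw [e3]
  ring

lemma stepB0 (n b : ℕ) (c d : ℤ) : Zt n b c d 0 = 0 := by
  simp only [Zt]
  have h1 : qbin q (c+d+(0:ℕ)) 0 = 1 := qbin_zero _
  have h2 : qbin q (c-1+d+(0:ℕ)) 0 = 1 := qbin_zero _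
  rw [h1, h2]
  have : ((n:ℤ)+1-((0:ℕ):ℤ)) = (n:ℤ)+1 := by push_cast; ring
  rw [this]
  ring

lemma stepB1 (n b k : ℕ) (c d : ℤ) (hk : k ≤ n) :
    Zt n b c d (k+1) = Vt n b c d k := by
  simp only [Zt, Vt]
  have e2 : n + 1 - (k+1) = n - k := by omega
  rw [e2]
  have eA : qbin q (c+d+((k+1:ℕ):ℤ)) (k+1) = qbin q ((c+d+k)+1) (k+1) :=
    qbin_congr _ (by push_cast; ring)
  rw [eA, pascalA (c+d+(k:ℤ)) k]
  have eA2 : qbin q (c-1+d+((k+1:ℕ):ℤ)) (k+1) = qbin q (c+d+k) (k+1) :=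
    qbin_congr _ (by push_cast; ring)
  rw [eA2]
  have p1 : q ^ ((n:ℤ)+1-((k+1:ℕ):ℤ)) * q ^ (((k:ℕ):ℤ)+1) = q ^ ((n:ℤ)+1) := by
    rw [← zpow_add₀ hq0]; congr 1; push_cast; ring
  have p2 : q ^ (((n:ℤ)+1-((k+1:ℕ):ℤ))*((b:ℤ)-((k+1:ℕ):ℤ))) * q ^ ((n:ℤ)+1-((k+1:ℕ):ℤ))
      = q ^ (((n:ℤ)-k)*((b:ℤ)-k)) := by
    rw [← zpow_add₀ hq0]; congr 1; push_cast; ring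
  linear_combination
    (qbin q (c+d+(k:ℤ)) k * qbin q (c+(n:ℤ)-b) (n-k) * qbin q (d+(b:ℤ)-n-1) (b-(k+1))) * p2 +
    (q ^ (((n:ℤ)+1-((k+1:ℕ):ℤ))*((b:ℤ)-((k+1:ℕ):ℤ))) * qbin q (c+d+(k:ℤ)) (k+1) *
      qbin q (c+(n:ℤ)-b) (n-k) * qbin q (d+(b:ℤ)-n-1) (b-(k+1))) * p1

lemma stepC1 (n b k : ℕ) (c d : ℤ) (hk : k ≤ n) (hb : n+1 ≤ b) :
    Ut n b c d k + Vt n b c d k = Tm n b c d k := by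
  obtain ⟨j, hj⟩ : ∃ j, b - k = j + 1 := ⟨b - k - 1, by omega⟩
  have hj2 : b - (k+1) = j := by omega
  simp only [Ut, Vt, Tm]
  rw [hj, hj2]
  have hC : qbin q (d + (b:ℤ) - n) (j+1) = qbin q ((d + (b:ℤ) - n - 1)+1) (j+1) :=
    qbin_congr _ (by ring)
  rw [hC, ← Cstep (d + (b:ℤ) - n - 1) j]
  have hjz : ((j:ℕ):ℤ) + 1 = (b:ℤ) - k := by omega
  rw [hjz]
  have p2 : q ^ (((n:ℤ)+1-k)*((b:ℤ)-k)) = q ^ (((n:ℤ)-k)*((b:ℤ)-k)) * q ^ ((b:ℤ)-k) := by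
    rw [← zpow_add₀ hq0]; congr 1; ring
  rw [p2]; ring

lemma R1 (n b : ℕ) (hb : n+1 ≤ b) (c d : ℤ) :
    ∑ k ∈ Finset.range (n+2), Tm (n+1) b c d k
      = ∑ k ∈ Finset.range (n+1), Tm n b c d k
        + q ^ ((n:ℤ)+1) * ∑ k ∈ Finset.range (n+2), Tm (n+1) b (c-1) d k := by
  have key : ∑ k ∈ Finset.range (n+2),
        (Tm (n+1) b c d k - q ^ ((n:ℤ)+1) * Tm (n+1) b (c-1) d k)
      = ∑ k ∈ Finset.range (n+1), Tm n b c d k := by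
    rw [Finset.sum_range_succ]
    have h1 : ∑ k ∈ Finset.range (n+1),
          (Tm (n+1) b c d k - q ^ ((n:ℤ)+1) * Tm (n+1) b (c-1) d k)
        = ∑ k ∈ Finset.range (n+1), (Ut n b c d k + Zt n b c d k) :=
      Finset.sum_congr rfl (fun k hk => stepA1 n b k c d (by simp at hk; omega))
    rw [h1, stepA2, Finset.sum_add_distrib]
    have h2 : ∑ k ∈ Finset.range (n+1), Zt n b c d k + Zt n b c d (n+1)
        = ∑ k ∈ Finset.range (n+1), Vt n b c d k := by
      rw [← Finset.sum_range_succ, Finset.sum_range_succ', stepB0, add_zero]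
      exact Finset.sum_congr rfl (fun k hk => stepB1 n b k c d (by simp at hk; omega))
    rw [add_assoc, h2, ← Finset.sum_add_distrib]
    exact Finset.sum_congr rfl (fun k hk => stepC1 n b k c d (by simp at hk; omega) hb)
  rw [Finset.sum_sub_distrib, ← Finset.mul_sum] at key
  linear_combination key

lemma base (n b : ℕ) (hb : n+1 ≤ b) (d : ℤ) :
    ∑ k ∈ Finset.range (n+2), Tm (n+1) b ((b:ℤ)-((n+1:ℕ):ℤ)) d k
      = qbin q (((b:ℤ)-((n+1:ℕ):ℤ)) + ((n+1:ℕ):ℤ)) (n+1) * qbin q (d+b) b := by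
  rw [Finset.sum_range_succ]
  have h0 : ∀ k ∈ Finset.range (n+1), Tm (n+1) b ((b:ℤ)-((n+1:ℕ):ℤ)) d k = 0 := by
    intro k hk
    simp only [Finset.mem_range] at hk
    simp only [Tm]
    have e2 : (n+1)-k = (n-k)+1 := by omega
    have e : qbin q (((b:ℤ)-((n+1:ℕ):ℤ)) + ((n+1:ℕ):ℤ) - b) ((n+1)-k)
        = qbin q 0 ((n-k)+1) := by
      rw [e2]; exact qbin_congr _ (by push_cast; ring)
    rw [e, qbin_zero_top]; ring
  rw [Finset.sum_eq_zero h0, zero_add]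
  simp only [Tm]
  have e2 : (n+1)-(n+1) = 0 := by omega
  rw [e2, qbin_zero]
  have e7 : ((((n+1:ℕ)):ℤ) - ((n+1:ℕ):ℤ)) * ((b:ℤ) - ((n+1:ℕ):ℤ)) = 0 := by push_cast; ring
  rw [e7, zpow_zero]
  have eA : qbin q (((b:ℤ)-((n+1:ℕ):ℤ)) + d + ((n+1:ℕ):ℤ)) (n+1) = qbin q (d+(b:ℤ)) (n+1) :=
    qbin_congr _ (by ring)
  have eC : qbin q (d + (b:ℤ) - ((n+1:ℕ):ℤ)) (b-(n+1)) = qbin q ((d+(b:ℤ)) - ((n+1:ℕ):ℤ)) (b-(n+1)) :=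
    qbin_congr _ (by ring)
  have eR : qbin q (((b:ℤ)-((n+1:ℕ):ℤ)) + ((n+1:ℕ):ℤ)) (n+1) = qbin q ((b:ℕ):ℤ) (n+1) :=
    qbin_congr _ (by ring)
  rw [eA, eC, eR]
  have tri := trinomial (d+(b:ℤ)) (n+1) b hb
  linear_combination -tri

lemma prop_zero (f : ℤ → K) (r : K) (hr : r ≠ 0) (h : ∀ c : ℤ, f c = r * f (c-1))
    (c₀ : ℤ) (h0 : f c₀ = 0) : ∀ c, f c = 0 := by
  have up : ∀ n : ℕ, f (c₀ + n) = 0 := by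
    intro n
    induction n with
    | zero => simpa using h0
    | succ m ih =>
        have hh := h (c₀ + m + 1)
        have e : c₀ + (m:ℤ) + 1 - 1 = c₀ + m := by ring
        rw [e, ih, mul_zero] at hh
        have e2 : (c₀ + ((m+1 : ℕ) : ℤ)) = c₀ + m + 1 := by push_cast; ring
        rw [e2, hh]
  have down : ∀ n : ℕ, f (c₀ - n) = 0 := by
    intro n
    induction n with
    | zero => simpa using h0
    | succ m ih =>
        have hh := h (c₀ - m)
        rw [ih] at hh
        have h2 : f (c₀ - m - 1) = 0 := by
          rcases mul_eq_zero.1 hh.symm with h' | h'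
          · exact absurd h' hr
          · exact h'
        have e2 : c₀ - ((m+1:ℕ):ℤ) = c₀ - m - 1 := by push_cast; ring
        rw [e2, h2]
  intro c
  rcases le_or_gt c₀ c with hc | hc
  · have : c = c₀ + ((c - c₀).toNat : ℤ) := by omega
    rw [this]; exact up _
  · have : c = c₀ - ((c₀ - c).toNat : ℤ) := by omega
    rw [this]; exact down _


lemma main : ∀ a b : ℕ, a ≤ b → ∀ c d : ℤ,
    ∑ k ∈ Finset.range (a+1), Tm a b c d k = qbin q (c + (a:ℤ)) a * qbin q (d + (b:ℤ)) b := by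
  intro a
  induction a with
  | zero =>
      intro b hb c d
      rw [Finset.sum_range_one]
      simp only [Tm]
      have e : (((0:ℕ):ℤ)-((0:ℕ):ℤ))*((b:ℤ)-((0:ℕ):ℤ)) = 0 := by push_cast; ring
      rw [e, zpow_zero]
      have e1 : qbin q (c+d+((0:ℕ):ℤ)) 0 = 1 := qbin_zero _
      have e2 : qbin q (c+((0:ℕ):ℤ)-(b:ℤ)) (0-0) = 1 := qbin_zero _
      have e3 : qbin q (d+(b:ℤ)-((0:ℕ):ℤ)) (b-0) = qbin q (d+(b:ℤ)) b := by
        have : b - 0 = b := by omega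
        rw [this]; exact qbin_congr _ (by push_cast; ring)
      have e4 : qbin q (c+((0:ℕ):ℤ)) 0 = 1 := qbin_zero _
      rw [e1, e2, e3, e4]
      ring
  | succ n ih =>
      intro b hb c d
      have hz := prop_zero
        (fun c => (∑ k ∈ Finset.range (n+2), Tm (n+1) b c d k)
          - qbin q (c + ((n+1:ℕ):ℤ)) (n+1) * qbin q (d+(b:ℤ)) b)
        (q ^ ((n:ℤ)+1)) (q_zpow_ne_zero _)
        (by
          intro c
          have r1 := R1 n b hb c d
          have ihc := ih b (by omega) c d
          have fr : qbin q (c + ((n+1:ℕ):ℤ)) (n+1)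
              = qbin q (c + (n:ℤ)) n + q ^ ((n:ℤ)+1) * qbin q ((c-1) + ((n+1:ℕ):ℤ)) (n+1) := by
            have e : qbin q (c + ((n+1:ℕ):ℤ)) (n+1) = qbin q ((c+(n:ℤ))+1) (n+1) :=
              qbin_congr _ (by push_cast; ring)
            rw [e, pascalA (c+(n:ℤ)) n,
              qbin_congr (n+1) (show c + (n:ℤ) = c - 1 + ((n+1:ℕ):ℤ) by push_cast; ring)]
          linear_combination r1 + ihc - qbin q (d+(b:ℤ)) b * fr)
        ((b:ℤ)-((n+1:ℕ):ℤ))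
        (by
          linear_combination base n b hb d)
      have := hz c
      linear_combination this


/-- Stanley's q-binomial identity. -/
theorem stanley (a b : ℕ) (c d : ℤ) :
    qbin q (c + a) a * qbin q (d + b) b =
      ∑ k ∈ Finset.range (min a b + 1),
        q ^ ((a - k) * (b - k)) * qbin q (c + d + k) k *
          qbin q (c + a - b) (a - k) * qbin q (d + b - a) (b - k) := by
  rcases le_total a b with hab | hba
  · have hmin : min a b = a := by omega
    rw [hmin, ← main a b hab c d]
    apply Finset.sum_congr rfl
    intro k hk
    simp only [Finset.mem_range] at hk
    simp only [Tm]
    have e : q ^ (((a-k)*(b-k) : ℕ)) = q ^ (((a:ℤ)-k)*((b:ℤ)-k)) := by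
      rw [← zpow_natCast]
      congr 1
      have h1 : k ≤ a := by omega
      have h2 : k ≤ b := by omega
      push_cast [Nat.cast_sub h1, Nat.cast_sub h2]
      ring
    rw [e]
  · have hmin : min a b = b := by omega
    rw [hmin, mul_comm, ← main b a hba d c]
    apply Finset.sum_congr rfl
    intro k hk
    simp only [Finset.mem_range] at hk
    simp only [Tm]
    have e : q ^ (((a-k)*(b-k) : ℕ)) = q ^ (((b:ℤ)-k)*((a:ℤ)-k)) := by
      rw [← zpow_natCast]
      congr 1
      have h1 : k ≤ a := by omega
      have h2 : k ≤ b := by omega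
      push_cast [Nat.cast_sub h1, Nat.cast_sub h2]
      ring
    rw [e, qbin_congr k (show c+d+(k:ℤ) = d+c+k by ring)]
    ring
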